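/- arXiv:math/0407351 — 2 statements merged into one kernel-verified Lean document; each statement's English description precedes it below -/
import Mathlib

section
/- Let M be a monoid of hypersubstitutions of L. If Σ is a set of identities of L that is closed under the M-hypersubstitution rule (i.e., for every identity (p, q) ∈ Σ and every σ ∈ M, the identity (σ̂p, σ̂q) also belongs to Σ), then E(Σ) = E_M^H(Σ): an identity is derivable from Σ by the rules (1)–(5) if and only if it is derivable from Σ by the rules (1)–(5) together with the rule (6)_M. -/
open FirstOrder Language

universe u v w

/-- A hypersubstitution of `L` assigns to each `n`-ary function symbol of `L`
an `L`-term with variables in `Fin n`. -/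
def Hypersub (L : FirstOrder.Language.{u, v}) : Type _ :=
  ∀ n : ℕ, L.Functions n → L.Term (Fin n)

variable {L : FirstOrder.Language.{u, v}}

/-- The extension `σ̂` of a hypersubstitution `σ` to all terms. -/
def Hypersub.apply (σ : Hypersub L) {α : Type w} : L.Term α → L.Term α
  | Term.var x => Term.var x
  | Term.func f ts => Term.subst (σ _ f) (fun i => Hypersub.apply σ (ts i))

/-- The derived structure `A^σ`: same universe, each function symbol `f` is
interpreted by the term function of `σ f` in `A`. -/
def Hypersub.derive (σ : Hypersub L) {A : Type w} (S : L.Structure A) : L.Structure A :=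
  letI := S
  { funMap := fun {n} f v => (σ n f).realize v
    RelMap := fun r v => Structure.RelMap r v }

/-- Realization of a term in an explicitly given structure. -/
def realizeIn {A : Type w} (S : L.Structure A) {α : Type*} (a : α → A) (t : L.Term α) : A :=
  letI := S
  t.realize a

/-- An identity `p = q` of `L` in `k` variables. -/
structure Identity (L : FirstOrder.Language.{u, v}) : Type max u (v + 1) where
  k : ℕ
  lhs : L.Term (Fin k)
  rhs : L.Term (Fin k)

/-- Satisfaction of an identity in a structure. -/
def Identity.Satisfied (e : Identity L) {A : Type w} (S : L.Structure A) : Prop :=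
  ∀ a : Fin e.k → A, realizeIn S a e.lhs = realizeIn S a e.rhs

/-- The identity `σ̂ p = σ̂ q`. -/
def Identity.hmap (σ : Hypersub L) (e : Identity L) : Identity L :=
  ⟨e.k, σ.apply e.lhs, σ.apply e.rhs⟩

/-- The identity hypersubstitution `σ_id`, with `σ_id f = f(x₀, …, x_{n-1})`. -/
def Hypersub.id (L : FirstOrder.Language.{u, v}) : Hypersub L :=
  fun _n f => Term.func f (fun i => Term.var i)

/-- Composition of hypersubstitutions: `(σ ∘ ρ) f = σ̂ (ρ f)`. -/
def Hypersub.comp (σ ρ : Hypersub L) : Hypersub L :=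
  fun n f => σ.apply (ρ n f)

/-- `M` is a monoid of hypersubstitutions: it contains the identity
hypersubstitution and is closed under composition. -/
def IsHypersubMonoid (M : Set (Hypersub L)) : Prop :=
  Hypersub.id L ∈ M ∧ ∀ σ ∈ M, ∀ ρ ∈ M, σ.comp ρ ∈ M

/-- Birkhoff's rules of inference (1)-(5): the equational consequence operator `E`.
`EqDeriv Γ e` means the identity `e` is derivable from `Γ` by reflexivity, symmetry,
transitivity, substitution and replacement. -/
inductive EqDeriv (Γ : Set (Identity L)) : Identity L → Prop
  | base {e : Identity L} : e ∈ Γ → EqDeriv Γ e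
  | refl (k : ℕ) (p : L.Term (Fin k)) : EqDeriv Γ ⟨k, p, p⟩
  | symm {k : ℕ} {p q : L.Term (Fin k)} : EqDeriv Γ ⟨k, p, q⟩ → EqDeriv Γ ⟨k, q, p⟩
  | trans {k : ℕ} {p q r : L.Term (Fin k)} :
      EqDeriv Γ ⟨k, p, q⟩ → EqDeriv Γ ⟨k, q, r⟩ → EqDeriv Γ ⟨k, p, r⟩
  | subst {k m : ℕ} {p q : L.Term (Fin k)} (h : Fin k → L.Term (Fin m)) :
      EqDeriv Γ ⟨k, p, q⟩ → EqDeriv Γ ⟨m, p.subst h, q.subst h⟩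
  | replace {n : ℕ} (f : L.Functions n) {k : ℕ} {p q : Fin n → L.Term (Fin k)} :
      (∀ i, EqDeriv Γ ⟨k, p i, q i⟩) → EqDeriv Γ ⟨k, Term.func f p, Term.func f q⟩

/-- Rules (1)-(5) together with the `M`-hypersubstitution rule `(6)_M`:
the operator `E_M^H`. -/
inductive EqDerivMH (M : Set (Hypersub L)) (Γ : Set (Identity L)) : Identity L → Prop
  | base {e : Identity L} : e ∈ Γ → EqDerivMH M Γ e
  | refl (k : ℕ) (p : L.Term (Fin k)) : EqDerivMH M Γ ⟨k, p, p⟩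
  | symm {k : ℕ} {p q : L.Term (Fin k)} :
      EqDerivMH M Γ ⟨k, p, q⟩ → EqDerivMH M Γ ⟨k, q, p⟩
  | trans {k : ℕ} {p q r : L.Term (Fin k)} :
      EqDerivMH M Γ ⟨k, p, q⟩ → EqDerivMH M Γ ⟨k, q, r⟩ → EqDerivMH M Γ ⟨k, p, r⟩
  | subst {k m : ℕ} {p q : L.Term (Fin k)} (h : Fin k → L.Term (Fin m)) :
      EqDerivMH M Γ ⟨k, p, q⟩ → EqDerivMH M Γ ⟨m, p.subst h, q.subst h⟩
  | replace {n : ℕ} (f : L.Functions n) {k : ℕ} {p q : Fin n → L.Term (Fin k)} :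
      (∀ i, EqDerivMH M Γ ⟨k, p i, q i⟩) →
        EqDerivMH M Γ ⟨k, Term.func f p, Term.func f q⟩
  | hyper {k : ℕ} {p q : L.Term (Fin k)} {σ : Hypersub L} (hσ : σ ∈ M) :
      EqDerivMH M Γ ⟨k, p, q⟩ → EqDerivMH M Γ ⟨k, σ.apply p, σ.apply q⟩

lemma Term.subst_subst' {α β γ : Type*} (t : L.Term α) (g : α → L.Term β)
    (h : β → L.Term γ) : (t.subst g).subst h = t.subst (fun i => (g i).subst h) := by
  induction t with
  | var => simp [Term.subst]
  | func f ts ih => simp only [Term.subst]; exact congrArg _ (funext ih)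

lemma Hypersub.apply_subst (σ : Hypersub L) {α β : Type*} (t : L.Term α)
    (h : α → L.Term β) :
    σ.apply (t.subst h) = (σ.apply t).subst (fun i => σ.apply (h i)) := by
  induction t with
  | var => simp [Hypersub.apply, Term.subst]
  | func f ts ih =>
    simp only [Term.subst, Hypersub.apply, Term.subst_subst']
    exact congrArg _ (funext fun i => ih i)

lemma eqDeriv_subst_congr {Γ : Set (Identity L)} {k m : ℕ} (t : L.Term (Fin m))
    {a b : Fin m → L.Term (Fin k)} (h : ∀ i, EqDeriv Γ ⟨k, a i, b i⟩) :
    EqDeriv Γ ⟨k, t.subst a, t.subst b⟩ := by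
  induction t with
  | var i => simpa [Term.subst] using h i
  | func f ts ih => exact EqDeriv.replace f fun i => ih i

lemma eqDeriv_hmap {M : Set (Hypersub L)} {Γ : Set (Identity L)}
    (hcl : ∀ e ∈ Γ, ∀ σ ∈ M, e.hmap σ ∈ Γ) {σ : Hypersub L} (hσ : σ ∈ M)
    {e : Identity L} (h : EqDeriv Γ e) : EqDeriv Γ (e.hmap σ) := by
  induction h with
  | base he => exact .base (hcl _ he σ hσ)
  | refl k p => exact .refl k (σ.apply p)
  | symm _ ih => exact .symm ih
  | trans _ _ ih1 ih2 => exact .trans ih1 ih2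
  | @subst k m p q f _ ih =>
    show EqDeriv Γ ⟨m, σ.apply (p.subst f), σ.apply (q.subst f)⟩
    rw [Hypersub.apply_subst, Hypersub.apply_subst]
    exact EqDeriv.subst _ ih
  | @replace n f k p q _ ih =>
    show EqDeriv Γ ⟨k, (σ n f).subst (fun i => σ.apply (p i)),
      (σ n f).subst (fun i => σ.apply (q i))⟩
    exact eqDeriv_subst_congr _ fun i => ih i

/-- Let `M` be a monoid of hypersubstitutions of `L`. If `Γ` is a
set of identities closed under the `M`-hypersubstitution rule, then `E(Γ) = E_M^H(Γ)`. -/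
theorem eqDeriv_eq_eqDerivMH {L : FirstOrder.Language.{u, v}} [L.IsAlgebraic]
    (M : Set (Hypersub L)) (hM : IsHypersubMonoid M) (Γ : Set (Identity L))
    (hcl : ∀ e ∈ Γ, ∀ σ ∈ M, e.hmap σ ∈ Γ) :
    ∀ e : Identity L, EqDeriv Γ e ↔ EqDerivMH M Γ e := by
  intro e
  constructor
  · intro h
    induction h with
    | base he => exact .base he
    | refl k p => exact .refl k p
    | symm _ ih => exact .symm ih
    | trans _ _ ih1 ih2 => exact .trans ih1 ih2
    | subst f _ ih => exact .subst f ih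
    | replace f _ ih => exact .replace f fun i => ih i
  · intro h
    induction h with
    | base he => exact .base he
    | refl k p => exact .refl k p
    | symm _ ih => exact .symm ih
    | trans _ _ ih1 ih2 => exact .trans ih1 ih2
    | subst f _ ih => exact .subst f ih
    | replace f _ ih => exact .replace f fun i => ih i
    | hyper hσ _ ih => exact eqDeriv_hmap hcl hσ ih
end

section
/- Let M be a monoid of hypersubstitutions of L, let Σ be a set of quasi-identities of L, and let QV be the quasivariety defined by Σ. Then every quasi-identity belonging to Σ is M-hyper-satisfied in every structure of QV if and only if QV is M-solid. -/
open FirstOrder Language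

universe u v w

variable {L : FirstOrder.Language.{u, v}}

/-- A quasi-identity of `L` in `k` variables with `n` premises:
`(t₀ = s₀ ∧ ⋯ ∧ t_{n-1} = s_{n-1}) → (tₙ = sₙ)`. -/
structure QuasiIdentity (L : FirstOrder.Language.{u, v}) : Type max u (v + 1) where
  k : ℕ
  n : ℕ
  lhs : Fin n → L.Term (Fin k)
  rhs : Fin n → L.Term (Fin k)
  lhsC : L.Term (Fin k)
  rhsC : L.Term (Fin k)

/-- Satisfaction of a quasi-identity in a structure. -/
def QuasiIdentity.Satisfied (e : QuasiIdentity L) {A : Type w} (S : L.Structure A) : Prop :=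
  ∀ a : Fin e.k → A,
    (∀ i, realizeIn S a (e.lhs i) = realizeIn S a (e.rhs i)) →
      realizeIn S a e.lhsC = realizeIn S a e.rhsC

/-- The quasi-identity `σ(e)` obtained by applying `σ̂` to every term of `e`. -/
def QuasiIdentity.hmap (σ : Hypersub L) (e : QuasiIdentity L) : QuasiIdentity L :=
  ⟨e.k, e.n, fun i => σ.apply (e.lhs i), fun i => σ.apply (e.rhs i),
    σ.apply e.lhsC, σ.apply e.rhsC⟩

/-- A quasi-identity is `M`-hyper-satisfied if `σ(e)` is satisfied for every `σ ∈ M`. -/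
def QuasiIdentity.MHyperSatisfied (M : Set (Hypersub L)) (e : QuasiIdentity L)
    {A : Type w} (S : L.Structure A) : Prop :=
  ∀ σ ∈ M, (e.hmap σ).Satisfied S

theorem realizeIn_derive {L : FirstOrder.Language.{u, v}} (σ : Hypersub L) {A : Type w}
    (S : L.Structure A) {α : Type*} (a : α → A) (t : L.Term α) :
    realizeIn (Hypersub.derive σ S) a t = realizeIn S a (σ.apply t) := by
  induction t with
  | var x => rfl
  | func f ts ih =>
    simp only [Hypersub.apply, realizeIn, Term.realize, Hypersub.derive, Term.realize_subst]
    congr 1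
    funext i
    exact ih i

theorem satisfied_derive_iff {L : FirstOrder.Language.{u, v}} (σ : Hypersub L) {A : Type w}
    (S : L.Structure A) (e : QuasiIdentity L) :
    e.Satisfied (Hypersub.derive σ S) ↔ (e.hmap σ).Satisfied S := by
  unfold QuasiIdentity.Satisfied QuasiIdentity.hmap
  simp only [realizeIn_derive]

/-- Let `M` be a monoid of hypersubstitutions and `QV` the
quasivariety defined by `Γ`. Then every quasi-identity belonging to `Γ` is
`M`-hyper-satisfied in every structure of `QV` if and only if `QV` is `M`-solid. -/
theorem M_hyperbasis_iff_M_solid {L : FirstOrder.Language.{u, v}} [L.IsAlgebraic]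
    (M : Set (Hypersub L)) (hM : IsHypersubMonoid M) (Γ : Set (QuasiIdentity L)) :
    (∀ e ∈ Γ, ∀ (A : Type w) (S : L.Structure A),
        (∀ e' ∈ Γ, e'.Satisfied S) → e.MHyperSatisfied M S) ↔
    (∀ (A : Type w) (S : L.Structure A), (∀ e' ∈ Γ, e'.Satisfied S) →
        ∀ σ ∈ M, ∀ e' ∈ Γ, e'.Satisfied (Hypersub.derive σ S)) := by
  constructor
  · intro h A S hQV σ hσ e' he'
    exact (satisfied_derive_iff σ S e').mpr (h e' he' A S hQV σ hσ)
  · intro h e he A S hQV σ hσ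
    exact (satisfied_derive_iff σ S e).mp (h A S hQV σ hσ e he)
end
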